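/- Let H be a 3-graph on n vertices that is a subgraph of a blowup of G_6^2 (the 3-graph on 6 vertices whose complement is {123,126,345,456}). Then |H| <= 2n^3/27. -/

import Mathlib

/-- The 3-graph `G_6^2` on vertex set `Fin 6`: all 3-element subsets except
`{1,2,3}, {1,2,6}, {3,4,5}, {4,5,6}` (written with vertices `0,…,5`). -/
def G62 : Finset (Finset (Fin 6)) :=
  (Finset.univ.powersetCard 3).filter
    (fun E => E ∉ ({{0, 1, 2}, {0, 1, 5}, {2, 3, 4}, {3, 4, 5}} : Finset (Finset (Fin 6))))

/-!
Every edge of `H` picks one vertex from each of the three parts of an edge `T` of `G_6^2`,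
so `|H|` is at most the edge polynomial `∑_{T ∈ G_6^2} ∏_{i ∈ T} n_i` of the part sizes.
With `p = n₀ + n₁`, `q = n₃ + n₄`, `r = n₂ + n₅` this polynomial equals
`n₂n₅(p + q) + r p q + n₀n₁ q + n₃n₄ p`, and AM-GM on the products bounds it by
`r²s/4 + r s²/4 + s³/16` where `s = p + q`; this cubic is at most `2(r + s)³/27`,
with equality at `s = 2r`.
-/

open Finset

lemma sum_G62_prod_eq {R : Type*} [CommSemiring R] (x : Fin 6 → R) :
    ∑ T ∈ G62, ∏ i ∈ T, x i =
      x 2 * x 5 * ((x 0 + x 1) + (x 3 + x 4)) + (x 2 + x 5) * ((x 0 + x 1) * (x 3 + x 4))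
        + x 0 * x 1 * (x 3 + x 4) + x 3 * x 4 * (x 0 + x 1) := by
  have hG62 : G62 = {{2,4,5},{2,3,5},{1,4,5},{1,3,5},{1,3,4},{1,2,5},{1,2,4},{1,2,3},
      {0,4,5},{0,3,5},{0,3,4},{0,2,5},{0,2,4},{0,2,3},{0,1,4},{0,1,3}} := by decide
  rw [hG62]
  simp +decide only [sum_insert, sum_singleton, prod_insert,
    prod_singleton, mem_insert, mem_singleton]
  ring

lemma cubic_le_of_nonneg {r s : ℝ} (hr : 0 ≤ r) (hs : 0 ≤ s) :
    r ^ 2 * s / 4 + r * s ^ 2 / 4 + s ^ 3 / 16 ≤ 2 * (r + s) ^ 3 / 27 := by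
  nlinarith [mul_nonneg (sq_nonneg (s - 2 * r)) (by positivity : 0 ≤ 5 * s + 8 * r)]

lemma sum_G62_prod_le {x : Fin 6 → ℝ} (hx : ∀ i, 0 ≤ x i) :
    ∑ T ∈ G62, ∏ i ∈ T, x i ≤ 2 * (∑ i, x i) ^ 3 / 27 := by
  set p := x 0 + x 1
  set q := x 3 + x 4
  set r := x 2 + x 5
  have amgm (a b : ℝ) : a * b ≤ (a + b) ^ 2 / 4 := by nlinarith [sq_nonneg (a - b)]
  have hp : 0 ≤ p := add_nonneg (hx 0) (hx 1)
  have hq : 0 ≤ q := add_nonneg (hx 3) (hx 4)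
  have hr : 0 ≤ r := add_nonneg (hx 2) (hx 5)
  calc ∑ T ∈ G62, ∏ i ∈ T, x i
      = x 2 * x 5 * (p + q) + r * (p * q) + x 0 * x 1 * q + x 3 * x 4 * p := sum_G62_prod_eq x
    _ ≤ r ^ 2 / 4 * (p + q) + r * ((p + q) ^ 2 / 4) + p ^ 2 / 4 * q + q ^ 2 / 4 * p := by
        gcongr <;> exact amgm _ _
    _ = r ^ 2 / 4 * (p + q) + r * ((p + q) ^ 2 / 4) + p * q * (p + q) / 4 := by ring
    _ ≤ r ^ 2 / 4 * (p + q) + r * ((p + q) ^ 2 / 4) + (p + q) ^ 2 / 4 * (p + q) / 4 := by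
        gcongr
        exact amgm _ _
    _ ≤ 2 * (r + (p + q)) ^ 3 / 27 := by
        convert cubic_le_of_nonneg hr (add_nonneg hp hq) using 1
        ring
    _ = 2 * (∑ i, x i) ^ 3 / 27 := by
        rw [Fin.sum_univ_six]
        ring

section Blowup

variable {V β : Type*} [Fintype V] [DecidableEq V] [DecidableEq β]

lemma card_le_prod_card_fiber_of_image_eq (f : V → β) (T : Finset β) (S : Finset (Finset V))
    (hS : ∀ E ∈ S, E.image f = T ∧ Set.InjOn f E) :
    #S ≤ ∏ i ∈ T, #{v | f v = i} := by
  rw [← card_pi]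
  refine card_le_card_of_surjOn (fun g => T.attach.image fun i => g i.1 i.2) ?_
  intro E hE
  obtain ⟨himage, hinj⟩ := hS E hE
  have hsection : ∀ i ∈ T, ∃ v ∈ E, f v = i := by
    intro i hi
    simpa [← himage] using hi
  choose g hgE hgf using hsection
  refine ⟨g, mem_pi.2 fun i hi => by simp [hgf i hi], ?_⟩
  ext v
  simp only [mem_image, mem_attach, true_and, Subtype.exists]
  constructor
  · rintro ⟨i, hi, rfl⟩
    exact hgE i hi
  · intro hv
    have hfv : f v ∈ T := himage ▸ mem_image_of_mem f hv
    exact ⟨f v, hfv, hinj (hgE _ hfv) hv (hgf _ hfv)⟩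

lemma card_le_sum_prod_card_fiber (f : V → β) (G : Finset (Finset β)) (H : Finset (Finset V))
    (hH : ∀ E ∈ H, E.image f ∈ G ∧ Set.InjOn f E) :
    #H ≤ ∑ T ∈ G, ∏ i ∈ T, #{v | f v = i} := by
  rw [card_eq_sum_card_fiberwise fun E hE => (hH E hE).1]
  gcongr with T
  exact card_le_prod_card_fiber_of_image_eq f T _ fun E hE =>
    ⟨(mem_filter.1 hE).2, (hH E (mem_filter.1 hE).1).2⟩

end Blowup

theorem stmt_13 {V : Type*} [Fintype V] [DecidableEq V] (n : ℕ) (hn : n = Fintype.card V)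
    (H : Finset (Finset V)) (f : V → Fin 6)
    (hH : ∀ E ∈ H, E.card = 3 ∧ (E.image f).card = 3 ∧ E.image f ∈ G62) :
    (H.card : ℝ) ≤ 2 * (n : ℝ) ^ 3 / 27 := by
  have hinj : ∀ E ∈ H, E.image f ∈ G62 ∧ Set.InjOn f E := fun E hE =>
    ⟨(hH E hE).2.2, card_image_iff.1 ((hH E hE).2.1.trans (hH E hE).1.symm)⟩
  have hparts : ∑ i, (#{v | f v = i} : ℝ) = n := by
    rw [hn, ← card_univ, card_eq_sum_card_fiberwise fun v _ => mem_univ (f v)]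
    push_cast
    rfl
  calc (#H : ℝ) ≤ ∑ T ∈ G62, ∏ i ∈ T, (#{v | f v = i} : ℝ) := by
        exact_mod_cast card_le_sum_prod_card_fiber f G62 H hinj
    _ ≤ 2 * (n : ℝ) ^ 3 / 27 := hparts ▸ sum_G62_prod_le fun _ => Nat.cast_nonneg _
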